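/- Let 𝔤 be a nonabelian nilpotent Lie algebra with inner product G satisfying the nilsoliton equation δ(Rc_G + (c/2)·Id) = 0 for some c ∈ ℝ. Then c = −2|Ric_G|²/R_G; in particular c > 0. -/

import Mathlib

open Matrix

namespace RFN

variable {n : ℕ}

/-- Bracket determined by structure constants: `[e i, e j] = ∑ k, c i j k • e k`. -/
def bra (c : Fin n → Fin n → Fin n → ℝ) (x y : Fin n → ℝ) : Fin n → ℝ :=
  fun k => ∑ i, ∑ j, x i * y j * c i j k

/-- `c` is a family of structure constants of a Lie algebra. -/
def IsLieSC (c : Fin n → Fin n → Fin n → ℝ) : Prop :=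
  (∀ i j k, c i j k = - c j i k) ∧
  ∀ x y z, bra c (bra c x y) z + bra c (bra c y z) x + bra c (bra c z x) y = 0

def adIter (c : Fin n → Fin n → Fin n → ℝ) (v : ℕ → Fin n → ℝ) :
    ℕ → (Fin n → ℝ) → (Fin n → ℝ)
  | 0, x => x
  | m + 1, x => bra c (v m) (adIter c v m x)

/-- Nilpotency of the Lie algebra with structure constants `c`. -/
def IsNilpotentSC (c : Fin n → Fin n → Fin n → ℝ) : Prop :=
  ∃ N : ℕ, ∀ v x, adIter c v N x = 0

/-- Inner product of vectors with respect to the metric matrix `G`. -/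
def gdot (G : Matrix (Fin n) (Fin n) ℝ) (x y : Fin n → ℝ) : ℝ :=
  ∑ i, ∑ j, x i * G i j * y j

/-- Components of the Ricci bilinear form of the invariant metric `G`:
`Ric_G(x,y) = -(1/2) Σ G([x,e_i],[y,e_j])G^{ij} + (1/4) Σ G^{ip}G^{jq}G([e_i,e_j],x)G([e_p,e_q],y)`. -/
noncomputable def Ricm (c : Fin n → Fin n → Fin n → ℝ) (G : Matrix (Fin n) (Fin n) ℝ) :
    Matrix (Fin n) (Fin n) ℝ :=
  Matrix.of fun a b =>
    -(1/2) * (∑ i, ∑ j, G⁻¹ i j * gdot G (c a i) (c b j))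
    + (1/4) * (∑ i, ∑ j, ∑ p, ∑ q, G⁻¹ i p * G⁻¹ j q *
        (∑ k, c i j k * G k a) * (∑ l, c p q l * G l b))

/-- Scalar curvature `R_G = -(1/4)|[·,·]|²_G`. -/
noncomputable def scalR (c : Fin n → Fin n → Fin n → ℝ) (G : Matrix (Fin n) (Fin n) ℝ) : ℝ :=
  -(1/4) * (∑ i, ∑ j, ∑ p, ∑ q, G⁻¹ i p * G⁻¹ j q * gdot G (c i j) (c p q))

/-- Ricci endomorphism `Rc_G = G⁻¹ Ric_G`. -/
noncomputable def Rc (c : Fin n → Fin n → Fin n → ℝ) (G : Matrix (Fin n) (Fin n) ℝ) :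
    Matrix (Fin n) (Fin n) ℝ := G⁻¹ * Ricm c G

/-- `δ(A)(e_i,e_j) = A[e_i,e_j] - [A e_i, e_j] - [e_i, A e_j]` (components). -/
def deltaE (c : Fin n → Fin n → Fin n → ℝ) (A : Matrix (Fin n) (Fin n) ℝ) :
    Fin n → Fin n → Fin n → ℝ :=
  fun i j k => (∑ l, A k l * c i j l) - (∑ l, A l i * c l j k) - (∑ l, A l j * c i l k)

/-- The inner product on `Λ²𝔤*⊗𝔤` induced by `G` (full sum over ordered pairs). -/
noncomputable def tinner (G : Matrix (Fin n) (Fin n) ℝ) (μ ν : Fin n → Fin n → Fin n → ℝ) : ℝ :=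
  ∑ i, ∑ j, ∑ p, ∑ q, G⁻¹ i p * G⁻¹ j q * gdot G (μ i j) (ν p q)

/-- The (Hilbert–Schmidt) inner product of endomorphisms induced by `G`. -/
noncomputable def einner (G : Matrix (Fin n) (Fin n) ℝ) (A B : Matrix (Fin n) (Fin n) ℝ) : ℝ :=
  ∑ i, ∑ j, G⁻¹ i j * gdot G (fun k => A k i) (fun k => B k j)

/-- The inner product of bilinear forms induced by `G`. -/
noncomputable def binner (G : Matrix (Fin n) (Fin n) ℝ) (S T : Matrix (Fin n) (Fin n) ℝ) : ℝ :=
  ∑ i, ∑ j, ∑ p, ∑ q, G⁻¹ i p * G⁻¹ j q * S i j * T p q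

/-- `|Ric_G|²`. -/
noncomputable def ric2 (c : Fin n → Fin n → Fin n → ℝ) (G : Matrix (Fin n) (Fin n) ℝ) : ℝ :=
  binner G (Ricm c G) (Ricm c G)

/-- The functional `W₊(G,τ) = τ R_G + τ² |Ric_G|²`. -/
noncomputable def Wplus (c : Fin n → Fin n → Fin n → ℝ) (G : Matrix (Fin n) (Fin n) ℝ) (τ : ℝ) : ℝ :=
  τ * scalR c G + τ ^ 2 * ric2 c G

/-- Structure constants of the 3-dimensional Heisenberg Lie algebra: `[e₀,e₁] = e₂`, `e₂` central. -/
def heis : Fin 3 → Fin 3 → Fin 3 → ℝ := fun i j k =>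
  if i = 0 ∧ j = 1 ∧ k = 2 then 1 else if i = 1 ∧ j = 0 ∧ k = 2 then -1 else 0

end RFN

/-!
Pairing `δ(A)` with the bracket `μ` gives `⟨δ(A), μ⟩ = 4 ⟨Rc_G, A⟩` for every endomorphism `A`;
this is pure index algebra, using only the antisymmetry of `μ`: the first term of `δ(A)` produces
the `1/4`-part of `Ric_G`, the other two (which agree) its `-1/2`-part. For `A = Id` we have
`δ(Id) = -μ`, so `⟨Rc_G, Id⟩ = -|μ|²/4 = R_G`, which is negative as `μ ≠ 0`. For
`A = Rc_G + (c/2) Id` the nilsoliton equation then gives `|Ric_G|² + (c/2) R_G = 0`, and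
`|Ric_G|² > 0` because `Ric_G = 0` would force `R_G = ⟨Rc_G, Id⟩ = 0`.
-/

open Matrix Finset

lemma Matrix.PosDef.apply_comm {ι : Type*} [Fintype ι] {M : Matrix ι ι ℝ} (hM : M.PosDef)
    (i j : ι) : M i j = M j i := by
  simpa using (hM.isHermitian.apply i j).symm

lemma Matrix.PosDef.sum_sum_mul_pos {ι : Type*} [Fintype ι] {M : Matrix ι ι ℝ} (hM : M.PosDef)
    {v : ι → ℝ} (hv : v ≠ 0) : 0 < ∑ p, ∑ q, v p * M p q * v q := by
  simpa [dotProduct, mulVec, Finset.mul_sum, mul_assoc] using hM.dotProduct_mulVec_pos hv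

lemma Finset.sum_comm_pairs {α β γ δ M : Type*} [Fintype α] [Fintype β] [Fintype γ] [Fintype δ]
    [AddCommMonoid M] (f : α → β → γ → δ → M) :
    ∑ a, ∑ b, ∑ c, ∑ d, f a b c d = ∑ c, ∑ d, ∑ a, ∑ b, f a b c d :=
  calc _ = ∑ a, ∑ c, ∑ b, ∑ d, f a b c d := sum_congr rfl fun _ _ => sum_comm
    _ = ∑ c, ∑ a, ∑ b, ∑ d, f a b c d := sum_comm
    _ = ∑ c, ∑ a, ∑ d, ∑ b, f a b c d :=
        sum_congr rfl fun _ _ => sum_congr rfl fun _ _ => sum_comm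
    _ = _ := sum_congr rfl fun _ _ => sum_comm

namespace RFN

variable {n : ℕ} {G : Matrix (Fin n) (Fin n) ℝ} {c : Fin n → Fin n → Fin n → ℝ}

lemma binner_self_pos (hG : G.PosDef) {S : Matrix (Fin n) (Fin n) ℝ} (hS : S ≠ 0) :
    0 < binner G S S := by
  have hv : (fun x : Fin n × Fin n => S x.1 x.2) ≠ 0 :=
    fun h => hS (by ext i j; exact congrFun h (i, j))
  refine ((hG.inv.kronecker hG.inv).sum_sum_mul_pos hv).trans_eq ?_
  simp only [binner, Fintype.sum_prod_type, kroneckerMap_apply]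
  exact sum_congr rfl fun _ _ => sum_congr rfl fun _ _ => sum_congr rfl fun _ _ =>
    sum_congr rfl fun _ _ => by ring

lemma tinner_self_pos (hG : G.PosDef) {μ : Fin n → Fin n → Fin n → ℝ} (hμ : μ ≠ 0) :
    0 < tinner G μ μ := by
  have hv : (fun x : (Fin n × Fin n) × Fin n => μ x.1.1 x.1.2 x.2) ≠ 0 :=
    fun h => hμ (by ext i j k; exact congrFun h ((i, j), k))
  refine (((hG.inv.kronecker hG.inv).kronecker hG).sum_sum_mul_pos hv).trans_eq ?_
  simp only [tinner, gdot, Fintype.sum_prod_type, kroneckerMap_apply, Finset.mul_sum]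
  refine sum_congr rfl fun i _ => sum_congr rfl fun j _ => ?_
  rw [sum_comm]
  refine sum_congr rfl fun p _ => ?_
  rw [sum_comm]
  exact sum_congr rfl fun q _ => sum_congr rfl fun k _ => sum_congr rfl fun m _ => by ring

lemma scalR_eq_tinner : scalR c G = -(1 / 4) * tinner G c c := rfl

lemma scalR_neg (hG : G.PosDef) (hc : c ≠ 0) : scalR c G < 0 := by
  have := tinner_self_pos hG hc
  rw [scalR_eq_tinner]
  linarith

lemma tinner_zero_left (ν : Fin n → Fin n → Fin n → ℝ) : tinner G 0 ν = 0 := by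
  simp [tinner, gdot]

lemma tinner_neg_left (μ ν : Fin n → Fin n → Fin n → ℝ) : tinner G (-μ) ν = -tinner G μ ν := by
  simp [tinner, gdot]

noncomputable def tinnerDual (G : Matrix (Fin n) (Fin n) ℝ) (ν : Fin n → Fin n → Fin n → ℝ) :
    Fin n → Fin n → Fin n → ℝ :=
  fun i j k => ∑ p, ∑ q, G⁻¹ i p * G⁻¹ j q * ∑ m, G k m * ν p q m

lemma tinner_eq_sum_mul_tinnerDual (μ ν : Fin n → Fin n → Fin n → ℝ) :
    tinner G μ ν = ∑ i, ∑ j, ∑ k, μ i j k * tinnerDual G ν i j k := by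
  simp only [tinner, tinnerDual, gdot, Finset.mul_sum]
  refine sum_congr rfl fun i _ => sum_congr rfl fun j _ => ?_
  symm
  rw [sum_comm]
  refine sum_congr rfl fun p _ => ?_
  rw [sum_comm]
  exact sum_congr rfl fun q _ => sum_congr rfl fun k _ => sum_congr rfl fun m _ => by ring

lemma tinnerDual_swap {ν : Fin n → Fin n → Fin n → ℝ} (hν : ∀ i j k, ν i j k = -ν j i k)
    (i j k : Fin n) : tinnerDual G ν j i k = -tinnerDual G ν i j k := by
  simp only [tinnerDual, ← sum_neg_distrib]
  rw [sum_comm]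
  refine sum_congr rfl fun p _ => sum_congr rfl fun q _ => ?_
  simp only [hν q p, mul_neg, sum_neg_distrib]
  ring

lemma deltaE_one : deltaE c 1 = -c := by
  ext i j k
  simp [deltaE, one_apply]

lemma tinner_deltaE (hc : ∀ i j k, c i j k = -c j i k) (A : Matrix (Fin n) (Fin n) ℝ) :
    tinner G (deltaE c A) c = ∑ k, ∑ l, A k l * ((∑ i, ∑ j, c i j l * tinnerDual G c i j k)
      - 2 * ∑ j, ∑ m, c k j m * tinnerDual G c l j m) := by
  have hsplit : ∑ i, ∑ j, ∑ k, deltaE c A i j k * tinnerDual G c i j k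
      = ∑ i, ∑ j, ∑ k, (∑ l, A k l * c i j l) * tinnerDual G c i j k
        - ∑ i, ∑ j, ∑ k, (∑ l, A l i * c l j k) * tinnerDual G c i j k
        - ∑ i, ∑ j, ∑ k, (∑ l, A l j * c i l k) * tinnerDual G c i j k := by
    simp only [deltaE, sub_mul, sum_sub_distrib]
  have hfirst : ∑ i, ∑ j, ∑ k, (∑ l, A k l * c i j l) * tinnerDual G c i j k
      = ∑ k, ∑ l, A k l * ∑ i, ∑ j, c i j l * tinnerDual G c i j k := by
    simp only [sum_mul, mul_sum, ← mul_assoc]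
    exact sum_comm_pairs _
  have hsecond : ∑ i, ∑ j, ∑ k, (∑ l, A l i * c l j k) * tinnerDual G c i j k
      = ∑ k, ∑ l, A k l * ∑ j, ∑ m, c k j m * tinnerDual G c l j m := by
    simp only [sum_mul, mul_sum, ← mul_assoc]
    symm
    rw [sum_comm]; refine sum_congr rfl fun i _ => ?_
    rw [sum_comm]; refine sum_congr rfl fun j _ => ?_
    rw [sum_comm]
  -- both `c` and its dual change sign under swapping the first two indices
  have hthird : ∑ i, ∑ j, ∑ k, (∑ l, A l j * c i l k) * tinnerDual G c i j k
      = ∑ i, ∑ j, ∑ k, (∑ l, A l i * c l j k) * tinnerDual G c i j k := by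
    rw [sum_comm]
    refine sum_congr rfl fun i _ => sum_congr rfl fun j _ => sum_congr rfl fun k _ => ?_
    simp only [tinnerDual_swap hc j i k, hc j, mul_neg, sum_neg_distrib, neg_mul]
  rw [tinner_eq_sum_mul_tinnerDual, hsplit, hthird, hfirst, hsecond]
  simp only [mul_sub, sum_sub_distrib, mul_left_comm _ (2 : ℝ), ← mul_sum]
  ring

noncomputable def ricS (c : Fin n → Fin n → Fin n → ℝ) (G : Matrix (Fin n) (Fin n) ℝ) :
    Matrix (Fin n) (Fin n) ℝ :=
  of fun a b => ∑ i, ∑ j, G⁻¹ i j * gdot G (c a i) (c b j)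

noncomputable def ricT (c : Fin n → Fin n → Fin n → ℝ) (G : Matrix (Fin n) (Fin n) ℝ) :
    Matrix (Fin n) (Fin n) ℝ :=
  of fun a b => ∑ i, ∑ j, ∑ p, ∑ q, G⁻¹ i p * G⁻¹ j q *
    (∑ k, c i j k * G k a) * (∑ l, c p q l * G l b)

lemma Ricm_eq : Ricm c G = (-(1 / 2) : ℝ) • ricS c G + (1 / 4 : ℝ) • ricT c G := by
  ext a b
  simp [Ricm, ricS, ricT]

lemma ricS_mul_inv_apply (hG : G.PosDef) (k l : Fin n) :
    (ricS c G * G⁻¹) k l = ∑ j, ∑ m, c k j m * tinnerDual G c l j m := by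
  simp only [mul_apply, ricS, of_apply, gdot, tinnerDual, sum_mul, mul_sum]
  rw [sum_comm]
  refine sum_congr rfl fun i _ => ?_
  conv_lhs => enter [2, a]; rw [sum_comm]
  rw [sum_comm]
  refine sum_congr rfl fun x _ => sum_congr rfl fun a _ => sum_congr rfl fun j _ =>
    sum_congr rfl fun y _ => ?_
  rw [hG.inv.apply_comm a l]
  ring

lemma ricT_mul_inv_apply (hG : G.PosDef) (k l : Fin n) :
    (ricT c G * G⁻¹) k l = ∑ i, ∑ j, c i j l * tinnerDual G c i j k := by
  have hraise : ∀ (X : ℝ) p q, ∑ a, X * (∑ y, c p q y * G y a) * G⁻¹ a l = X * c p q l := by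
    intro X p q
    have h : c p q ᵥ* G ᵥ* G⁻¹ = c p q := by
      rw [vecMul_vecMul, mul_nonsing_inv _ ((isUnit_iff_isUnit_det G).mp hG.isUnit), vecMul_one]
    rw [← congrFun h l]
    simp only [vecMul, dotProduct]
    rw [mul_sum]
    simp only [mul_assoc]
  calc (ricT c G * G⁻¹) k l
      = ∑ i, ∑ j, ∑ p, ∑ q, G⁻¹ i p * G⁻¹ j q * (∑ x, c i j x * G x k) * c p q l := by
        simp only [mul_apply, ricT, of_apply, sum_mul]
        rw [sum_comm]; refine sum_congr rfl fun i _ => ?_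
        rw [sum_comm]; refine sum_congr rfl fun j _ => ?_
        rw [sum_comm]; refine sum_congr rfl fun p _ => ?_
        rw [sum_comm]; exact sum_congr rfl fun q _ => hraise _ p q
    _ = ∑ p, ∑ q, ∑ i, ∑ j, G⁻¹ i p * G⁻¹ j q * (∑ x, c i j x * G x k) * c p q l :=
        sum_comm_pairs _
    _ = ∑ i, ∑ j, c i j l * tinnerDual G c i j k := by
        simp only [tinnerDual, mul_sum]
        refine sum_congr rfl fun i _ => sum_congr rfl fun j _ => sum_congr rfl fun p _ =>
          sum_congr rfl fun q _ => ?_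
        rw [hG.inv.apply_comm p i, hG.inv.apply_comm q j, sum_mul]
        exact sum_congr rfl fun x _ => by rw [hG.apply_comm x k]; ring

lemma four_mul_Ricm_mul_inv_apply (hG : G.PosDef) (k l : Fin n) :
    4 * (Ricm c G * G⁻¹) k l
      = ∑ i, ∑ j, c i j l * tinnerDual G c i j k - 2 * ∑ j, ∑ m, c k j m * tinnerDual G c l j m := by
  simp only [Ricm_eq, Matrix.add_mul, smul_mul, Matrix.add_apply, Matrix.smul_apply,
    ricS_mul_inv_apply hG, ricT_mul_inv_apply hG, smul_eq_mul]
  ring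

lemma einner_add_right (R A B : Matrix (Fin n) (Fin n) ℝ) :
    einner G R (A + B) = einner G R A + einner G R B := by
  simp only [einner, gdot, Matrix.add_apply, mul_add, sum_add_distrib]

lemma einner_smul_right (R A : Matrix (Fin n) (Fin n) ℝ) (t : ℝ) :
    einner G R (t • A) = t * einner G R A := by
  simp only [einner, gdot, Matrix.smul_apply, smul_eq_mul, mul_sum]
  exact sum_congr rfl fun _ _ => sum_congr rfl fun _ _ => sum_congr rfl fun _ _ =>
    sum_congr rfl fun _ _ => by ring

lemma einner_inv_mul_left (hG : G.PosDef) (S A : Matrix (Fin n) (Fin n) ℝ) :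
    einner G (G⁻¹ * S) A = ∑ l, ∑ i, ∑ j, G⁻¹ i j * S l i * A l j := by
  have hsymm : G⁻¹ᵀ = G⁻¹ := by
    simpa [conjTranspose_eq_transpose_of_trivial] using hG.inv.isHermitian.eq
  have hlower : ∀ i y, ∑ x, (G⁻¹ * S) x i * G x y = S y i := by
    have h : (G⁻¹ * S)ᵀ * G = Sᵀ := by
      rw [transpose_mul, hsymm, Matrix.mul_assoc,
        nonsing_inv_mul _ ((isUnit_iff_isUnit_det G).mp hG.isUnit), Matrix.mul_one]
    intro i y
    simpa only [mul_apply, transpose_apply] using congrFun (congrFun h i) y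
  calc einner G (G⁻¹ * S) A
      = ∑ i, ∑ j, G⁻¹ i j * ∑ y, (∑ x, (G⁻¹ * S) x i * G x y) * A y j := by
        simp only [einner, gdot, sum_mul]
        exact sum_congr rfl fun i _ => sum_congr rfl fun j _ => congrArg _ sum_comm
    _ = ∑ l, ∑ i, ∑ j, G⁻¹ i j * S l i * A l j := by
        simp only [hlower, mul_sum]
        symm
        rw [sum_comm]; refine sum_congr rfl fun i _ => ?_
        rw [sum_comm]; exact sum_congr rfl fun j _ => sum_congr rfl fun l _ => by ring

theorem tinner_deltaE_eq_four_mul_einner_Rc (hc : ∀ i j k, c i j k = -c j i k)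
    (hG : G.PosDef) (A : Matrix (Fin n) (Fin n) ℝ) :
    tinner G (deltaE c A) c = 4 * einner G (Rc c G) A :=
  calc tinner G (deltaE c A) c = ∑ k, ∑ l, A k l * (4 * (Ricm c G * G⁻¹) k l) := by
        simp only [tinner_deltaE hc, four_mul_Ricm_mul_inv_apply hG]
    _ = 4 * einner G (Rc c G) A := by
        simp only [Rc, einner_inv_mul_left hG, mul_apply, mul_sum]
        refine sum_congr rfl fun k _ => ?_
        rw [sum_comm]
        exact sum_congr rfl fun a _ => sum_congr rfl fun l _ => by ring

lemma einner_Rc_one (hc : ∀ i j k, c i j k = -c j i k) (hG : G.PosDef) :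
    einner G (Rc c G) 1 = scalR c G := by
  have h := tinner_deltaE_eq_four_mul_einner_Rc hc hG 1
  rw [deltaE_one, tinner_neg_left] at h
  rw [scalR_eq_tinner]
  linarith

lemma einner_Rc_self (hG : G.PosDef) : einner G (Rc c G) (Rc c G) = ric2 c G := by
  simp only [Rc, einner_inv_mul_left hG, ric2, binner, mul_apply, mul_sum]
  refine sum_congr rfl fun l _ => sum_congr rfl fun i _ => ?_
  rw [sum_comm]
  exact sum_congr rfl fun a _ => sum_congr rfl fun j _ => by ring

lemma ric2_pos (hc : ∀ i j k, c i j k = -c j i k) (hG : G.PosDef) (hR : scalR c G ≠ 0) :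
    0 < ric2 c G := by
  refine binner_self_pos hG fun hRic => hR ?_
  rw [← einner_Rc_one hc hG, Rc, hRic, einner]
  simp [gdot]

end RFN

open RFN Matrix

theorem stmt14_general {n : ℕ} (cs : Fin n → Fin n → Fin n → ℝ) (hcs : IsLieSC cs)
    (hna : ∃ i j k, cs i j k ≠ 0)
    (G : Matrix (Fin n) (Fin n) ℝ) (hG : G.PosDef) (c : ℝ)
    (hsol : deltaE cs (Rc cs G + (c/2) • (1 : Matrix (Fin n) (Fin n) ℝ)) = 0) :
    c = -2 * ric2 cs G / scalR cs G ∧ 0 < c := by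
  have hcs0 : cs ≠ 0 := by
    obtain ⟨i, j, k, hijk⟩ := hna
    exact fun h => hijk (by simp [h])
  have hscal : scalR cs G < 0 := scalR_neg hG hcs0
  have hric : 0 < ric2 cs G := ric2_pos hcs.1 hG hscal.ne
  have hkey : ric2 cs G + c / 2 * scalR cs G = 0 := by
    have h := tinner_deltaE_eq_four_mul_einner_Rc hcs.1 hG (Rc cs G + (c / 2) • 1)
    rw [hsol, tinner_zero_left, einner_add_right, einner_smul_right, einner_Rc_self hG,
      einner_Rc_one hcs.1 hG] at h
    linarith
  have hc : c = -2 * ric2 cs G / scalR cs G := by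
    rw [eq_div_iff hscal.ne]
    linarith
  exact ⟨hc, hc ▸ div_pos_of_neg_of_neg (by linarith) hscal⟩

theorem stmt14 {n : ℕ} (cs : Fin n → Fin n → Fin n → ℝ) (hcs : IsLieSC cs)
    (hnil : IsNilpotentSC cs) (hna : ∃ i j k, cs i j k ≠ 0)
    (G : Matrix (Fin n) (Fin n) ℝ) (hG : G.PosDef) (c : ℝ)
    (hsol : deltaE cs (Rc cs G + (c/2) • (1 : Matrix (Fin n) (Fin n) ℝ)) = 0) :
    c = -2 * ric2 cs G / scalR cs G ∧ 0 < c :=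
  stmt14_general cs hcs hna G hG c hsol
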